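/- If X is standard Gaussian, then the amplifier φ(a) = E[X·erf(X·alg⁻¹(a)/√2)] equals √(2/π)·a for all a ∈ (-1,1), i.e. φ is exactly linear. -/

import Mathlib

/-!
Gaussian integration by parts (Stein's lemma, from `gauss' = -x · gauss`) turns
`E[X erf(cX)]` into `E[∂ₓ erf(cX)] = (2c/√π) E[exp(-c²X²)]`, a Gaussian integral equal to
`(2/√π) · c/√(1 + 2c²)`. For `c = alg⁻¹(a)/√2` we get `1 + 2c² = 1 + alg⁻¹(a)² = 1/(1 - a²)`,
hence `c/√(1 + 2c²) = a/√2`.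
-/

open MeasureTheory Real

noncomputable def erf (x : ℝ) : ℝ := (2 / Real.sqrt π) * ∫ s in (0:ℝ)..x, Real.exp (-s ^ 2)

noncomputable def algInv (a : ℝ) : ℝ := a / Real.sqrt (1 - a ^ 2)

noncomputable def gauss (z : ℝ) : ℝ := (Real.sqrt (2 * π))⁻¹ * Real.exp (-z ^ 2 / 2)

lemma hasDerivAt_erf (x : ℝ) : HasDerivAt erf (2 / √π * exp (-x ^ 2)) x :=
  ((continuous_exp.comp (continuous_pow 2).neg).integral_hasStrictDerivAt 0 x).hasDerivAt.const_mul _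

lemma continuous_erf : Continuous erf :=
  continuous_iff_continuousAt.2 fun x => (hasDerivAt_erf x).continuousAt

lemma abs_erf_le (x : ℝ) : |erf x| ≤ 2 / √π * |x| := by
  have h : ‖∫ s in (0:ℝ)..x, exp (-s ^ 2)‖ ≤ 1 * |x - 0| :=
    intervalIntegral.norm_integral_le_of_norm_le_const fun s _ => by
      rw [norm_of_nonneg (exp_pos _).le, exp_le_one_iff]
      exact neg_nonpos.2 (sq_nonneg s)
  rw [erf, abs_mul, abs_of_nonneg (by positivity)]
  rw [norm_eq_abs, one_mul, sub_zero] at h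
  gcongr

lemma gauss_nonneg (x : ℝ) : 0 ≤ gauss x := by
  unfold gauss; positivity

lemma hasDerivAt_gauss (x : ℝ) : HasDerivAt gauss (-(x * gauss x)) x := by
  have h : HasDerivAt (fun z : ℝ => -z ^ 2 / 2) (-x) x :=
    ((hasDerivAt_pow 2 x).neg.div_const 2).congr_deriv (by norm_num; ring)
  exact (h.exp.const_mul (√(2 * π))⁻¹).congr_deriv (by unfold gauss; ring)

lemma continuous_gauss : Continuous gauss :=
  continuous_iff_continuousAt.2 fun x => (hasDerivAt_gauss x).continuousAt

lemma integrable_one_add_sq_mul_gauss : Integrable fun x : ℝ => (1 + x ^ 2) * gauss x := by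
  have h2 : Integrable fun x : ℝ => x ^ 2 * exp (-(1 / 2) * x ^ 2) := by
    simpa using integrable_rpow_mul_exp_neg_mul_sq (b := 1 / 2) (by norm_num) (s := 2) (by norm_num)
  convert ((integrable_exp_neg_mul_sq (b := 1 / 2) (by norm_num)).add h2).const_mul
    (√(2 * π))⁻¹ using 2 with x
  rw [gauss, Pi.add_apply]; ring_nf

lemma integrable_mul_gauss_of_abs_le {f : ℝ → ℝ} {C : ℝ} (hf : AEStronglyMeasurable f)
    (hC : ∀ x, |f x| ≤ C * (1 + x ^ 2)) : Integrable fun x => f x * gauss x := by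
  refine (integrable_one_add_sq_mul_gauss.const_mul C).mono'
    (hf.mul continuous_gauss.aestronglyMeasurable) (Filter.Eventually.of_forall fun x => ?_)
  rw [norm_mul, norm_of_nonneg (gauss_nonneg x), ← mul_assoc]
  exact mul_le_mul_of_nonneg_right (hC x) (gauss_nonneg x)

theorem integral_mul_mul_gauss_eq_integral_deriv_mul_gauss {f f' : ℝ → ℝ}
    (hf : ∀ x, HasDerivAt f (f' x) x) (hxf : Integrable fun x => x * f x * gauss x)
    (hf' : Integrable fun x => f' x * gauss x) (hf0 : Integrable fun x => f x * gauss x) :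
    ∫ x, x * f x * gauss x = ∫ x, f' x * gauss x := by
  have h := integral_mul_deriv_eq_deriv_mul_of_integrable (u := f) (v := fun x => -gauss x)
    (fun x _ => hf x) (fun x _ => (hasDerivAt_gauss x).neg)
    (hxf.congr (.of_forall fun x => by simp only [Pi.mul_apply]; ring))
    (hf'.neg.congr (.of_forall fun x => by simp only [Pi.mul_apply, Pi.neg_apply]; ring))
    (hf0.neg.congr (.of_forall fun x => by simp only [Pi.mul_apply, Pi.neg_apply]; ring))
  simp only [neg_neg, mul_neg, integral_neg] at h
  simpa only [mul_comm, mul_left_comm] using h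

lemma integral_exp_neg_sq_mul_gauss (c : ℝ) :
    ∫ x, exp (-(c * x) ^ 2) * gauss x = (√(1 + 2 * c ^ 2))⁻¹ := by
  have hc : 0 < 1 + 2 * c ^ 2 := by positivity
  have h : ∀ x, exp (-(c * x) ^ 2) * gauss x = (√(2 * π))⁻¹ * exp (-(c ^ 2 + 1 / 2) * x ^ 2) := by
    intro x
    rw [gauss, mul_left_comm, ← exp_add]
    ring_nf
  simp_rw [h]
  rw [integral_const_mul, integral_gaussian,
    show π / (c ^ 2 + 1 / 2) = 2 * π / (1 + 2 * c ^ 2) by field_simp; ring,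
    sqrt_div (by positivity)]
  field_simp

theorem integral_mul_erf_mul_gauss (c : ℝ) :
    ∫ x, x * erf (c * x) * gauss x = 2 / √π * c / √(1 + 2 * c ^ 2) := by
  set C := 2 / √π * |c|
  have hC : 0 ≤ C := by positivity
  have hf (x : ℝ) : HasDerivAt (fun x => erf (c * x)) (2 / √π * exp (-(c * x) ^ 2) * c) x :=
    (hasDerivAt_erf (c * x)).comp x (((hasDerivAt_id x).const_mul c).congr_deriv (mul_one c))
  have hlin (x : ℝ) : |erf (c * x)| ≤ C * |x| :=
    (abs_erf_le (c * x)).trans_eq (by rw [abs_mul, mul_assoc])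
  have hcont : Continuous fun x => erf (c * x) := continuous_erf.comp (continuous_const_mul c)
  rw [integral_mul_mul_gauss_eq_integral_deriv_mul_gauss hf]
  · calc ∫ x, 2 / √π * exp (-(c * x) ^ 2) * c * gauss x
          = ∫ x, 2 / √π * c * (exp (-(c * x) ^ 2) * gauss x) := by congr 1; ext x; ring
      _ = 2 / √π * c / √(1 + 2 * c ^ 2) := by
          rw [integral_const_mul, integral_exp_neg_sq_mul_gauss, ← div_eq_mul_inv]
  · refine integrable_mul_gauss_of_abs_le (C := C)
      (continuous_id.mul hcont).aestronglyMeasurable fun x => ?_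
    rw [abs_mul]
    nlinarith [hlin x, abs_nonneg x, sq_abs x]
  · refine integrable_mul_gauss_of_abs_le (C := C) (by fun_prop) fun x => ?_
    have he : exp (-(c * x) ^ 2) ≤ 1 := exp_le_one_iff.2 (by nlinarith)
    rw [abs_mul, abs_mul, abs_of_pos (exp_pos _), abs_of_nonneg (by positivity : (0:ℝ) ≤ 2 / √π)]
    nlinarith [abs_nonneg c, sq_nonneg x, exp_pos (-(c * x) ^ 2)]
  · refine integrable_mul_gauss_of_abs_le (C := C) hcont.aestronglyMeasurable fun x => ?_
    have hx : |x| ≤ 1 + x ^ 2 := by nlinarith [sq_abs x, sq_nonneg (|x| - 1)]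
    exact (hlin x).trans (mul_le_mul_of_nonneg_left hx hC)

lemma algInv_div_sqrt_one_add_sq {a : ℝ} (ha : a ∈ Set.Ioo (-1 : ℝ) 1) :
    algInv a / √(1 + algInv a ^ 2) = a := by
  have h : 0 < 1 - a ^ 2 := by nlinarith [ha.1, ha.2]
  have hs : 0 < √(1 - a ^ 2) := sqrt_pos.2 h
  have h1 : 1 + algInv a ^ 2 = (√(1 - a ^ 2) ^ 2)⁻¹ := by
    rw [algInv, div_pow, sq_sqrt h.le]
    field_simp
    ring
  rw [h1, sqrt_inv, sqrt_sq hs.le, algInv]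
  field_simp

theorem gaussian_amplifier_linear :
    ∀ a ∈ Set.Ioo (-1 : ℝ) 1,
      (∫ z, z * erf (z * algInv a / Real.sqrt 2) * gauss z) =
        Real.sqrt (2 / π) * a := by
  intro a ha
  have hc : 1 + 2 * (algInv a / √2) ^ 2 = 1 + algInv a ^ 2 := by
    rw [div_pow, sq_sqrt zero_le_two]; ring
  calc ∫ z, z * erf (z * algInv a / √2) * gauss z
        = ∫ z, z * erf (algInv a / √2 * z) * gauss z := by
          simp_rw [mul_comm _ (algInv a), mul_div_right_comm]
    _ = 2 / √π * (algInv a / √2) / √(1 + 2 * (algInv a / √2) ^ 2) :=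
        integral_mul_erf_mul_gauss _
    _ = 2 / √π / √2 * (algInv a / √(1 + algInv a ^ 2)) := by rw [hc]; ring
    _ = √(2 / π) * a := by
        rw [algInv_div_sqrt_one_add_sq ha, sqrt_div zero_le_two]
        field_simp
        rw [sq_sqrt zero_le_two]
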